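/- arXiv:2002.01470 — 5 statements merged into one kernel-verified Lean document; each statement's English description precedes it below -/
import Mathlib

section
/- Let p be a prime number and let m and n be integers such that m − n is not divisible by p − 1. Let M and N be modules over the ring ℤ_p of p-adic integers, and let f : M → N be a ℤ_p-linear map such that for every unit u ∈ ℤ_pˣ and every x ∈ M one has f((u^m) • x) = (u^n) • f(x) (that is, f is equivariant for the weight m cyclotomic action on M and the weight n cyclotomic action on N). Then f is the zero map. -/
/-!
A generator `g` of the cyclic group `(ZMod p)ˣ` of order `p - 1` satisfies `g ^ (m - n) ≠ 1`.
Lifting it to a unit `u` of the local ring `ℤ_[p]`, the element `u ^ (m - n) - 1` reduces to a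
nonzero element of `ZMod p`, hence is a unit. Equivariance gives `u ^ (m - n) • f x = f x`, so
`(u ^ (m - n) - 1) • f x = 0` and therefore `f x = 0`.
-/

lemma ZMod.exists_unit_zpow_ne_one {p : ℕ} [Fact p.Prime] {k : ℤ} (hk : ¬ ((p : ℤ) - 1) ∣ k) :
    ∃ g : (ZMod p)ˣ, g ^ k ≠ 1 := by
  obtain ⟨g, hg⟩ := IsCyclic.exists_ofOrder_eq_natCard (α := (ZMod p)ˣ)
  refine ⟨g, fun h => hk ?_⟩
  rwa [← orderOf_dvd_iff_zpow_eq_one, hg, Nat.card_eq_fintype_card, ZMod.card_units,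
    Nat.cast_pred (Fact.out : p.Prime).pos] at h

lemma PadicInt.exists_unit_isUnit_zpow_sub_one {p : ℕ} [Fact p.Prime] {k : ℤ}
    (hk : ¬ ((p : ℤ) - 1) ∣ k) : ∃ u : ℤ_[p]ˣ, IsUnit (((u ^ k : ℤ_[p]ˣ) : ℤ_[p]) - 1) := by
  obtain ⟨g, hg⟩ := ZMod.exists_unit_zpow_ne_one hk
  have hsurj := ZMod.ringHom_surjective (toZMod : ℤ_[p] →+* ZMod p)
  obtain ⟨u, rfl⟩ := IsLocalRing.surjective_units_map_of_local_ringHom _ hsurj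
    (IsLocalHom.of_surjective _ hsurj) g
  refine ⟨u, IsUnit.of_map toZMod _ ?_⟩
  have hred : toZMod ((u ^ k : ℤ_[p]ˣ) : ℤ_[p]) =
      ((Units.map (toZMod : ℤ_[p] →+* ZMod p).toMonoidHom u ^ k : (ZMod p)ˣ) : ZMod p) := by
    rw [← map_zpow]
    rfl
  rw [map_sub, map_one, hred, isUnit_iff_ne_zero, sub_ne_zero]
  exact fun h => hg (Units.ext h)

lemma LinearMap.zpow_sub_smul_apply_of_map_zpow_smul {R M N : Type*} [Semiring R]
    [AddCommMonoid M] [AddCommMonoid N] [Module R M] [Module R N] (f : M →ₗ[R] N) {u : Rˣ}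
    {m n : ℤ} {x : M} (h : f (((u ^ m : Rˣ) : R) • x) = ((u ^ n : Rˣ) : R) • f x) :
    ((u ^ (m - n) : Rˣ) : R) • f x = f x := by
  rw [map_smul, ← Units.smul_def, ← Units.smul_def] at h
  rw [← Units.smul_def]
  apply smul_left_cancel (u ^ n)
  rw [smul_smul, ← zpow_add, add_sub_cancel, h]

/-- Proposition 2.3 of the paper: Let `p` be a prime and `m`, `n` integers with
`m - n` not divisible by `p - 1`.  Any `ℤ_p`-linear map `f : M → N` which is equivariant for
the weight `m` cyclotomic action on `M` and the weight `n` cyclotomic action on `N`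
(i.e. `f (u^m • x) = u^n • f x` for all units `u` of `ℤ_p`) is the zero map. -/
theorem cyclotomic_weight_equivariant_map_eq_zero (p : ℕ) [Fact p.Prime] (m n : ℤ)
    (hmn : ¬ ((p : ℤ) - 1) ∣ (m - n))
    (M N : Type*) [AddCommGroup M] [AddCommGroup N]
    [Module ℤ_[p] M] [Module ℤ_[p] N]
    (f : M →ₗ[ℤ_[p]] N)
    (hf : ∀ (u : ℤ_[p]ˣ) (x : M),
      f (((u ^ m : ℤ_[p]ˣ) : ℤ_[p]) • x) = ((u ^ n : ℤ_[p]ˣ) : ℤ_[p]) • f x) :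
    f = 0 := by
  obtain ⟨u, hu⟩ := PadicInt.exists_unit_isUnit_zpow_sub_one hmn
  ext x
  have hfix := f.zpow_sub_smul_apply_of_map_zpow_smul (hf u x)
  rw [LinearMap.zero_apply, ← hu.smul_eq_zero, sub_smul, one_smul, hfix, sub_self]
end

section
/- Let p be a prime number, let u be a unit of ℤ_p whose residue class modulo p generates (ℤ/pℤ)ˣ, and let i and j be integers such that i − j is not divisible by p − 1. Let N be any ℤ_p-module. Then every ℤ_p[T,T⁻¹]-linear map from ℤ_p(i) to N(j) is zero, i.e. Hom_{ℤ_p[T,T⁻¹]}(ℤ_p(i), N(j)) = 0. -/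
/-! An `ℤ_p[T,T⁻¹]`-linear map `f : ℤ_p(i) → N(j)` is in particular `ℤ_p`-linear, hence determined
by `f 1`, and comparing the two actions of `T` on `f 1` gives `(u ^ i - u ^ j) • f 1 = 0`. Since
`u` has order `p - 1` modulo `p`, the residue of `u ^ i - u ^ j` is nonzero, so it is a unit of
the local ring `ℤ_p` and `f 1 = 0`. -/

/-- Evaluation of a Laurent polynomial over `ℤ_p` at a unit `c ∈ ℤ_pˣ`: the `ℤ_p`-algebra
homomorphism `ℤ_p[T,T⁻¹] → ℤ_p` sending `T` to `c`. -/
noncomputable def LaurentPolynomial.evalUnit (p : ℕ) [Fact p.Prime] (c : ℤ_[p]ˣ) :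
    LaurentPolynomial ℤ_[p] →+* ℤ_[p] :=
  ((AddMonoidAlgebra.lift ℤ_[p] ℤ_[p] ℤ)
    ((Units.coeHom ℤ_[p]).comp (zpowersHom ℤ_[p]ˣ c))).toRingHom

/-- Given a `ℤ_p`-module `N` and a unit `c ∈ ℤ_pˣ`, this is the `ℤ_p[T,T⁻¹]`-module structure
on `N` obtained by restriction of scalars along evaluation at `c`, i.e. `T` acts as
multiplication by `c`.  Taking `c = u ^ i` yields the module denoted `N(i)` in the paper. -/
noncomputable def twistedModule (p : ℕ) [Fact p.Prime] (N : Type*) [AddCommGroup N]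
    [Module ℤ_[p] N] (c : ℤ_[p]ˣ) : Module (LaurentPolynomial ℤ_[p]) N :=
  Module.compHom N (LaurentPolynomial.evalUnit p c)

theorem LinearMap.eq_zero_of_isUnit_sub_of_compHom {R A M : Type*} [CommRing R] [CommRing A]
    [Algebra R A] [AddCommGroup M] [Module R M] (φ ψ : A →ₐ[R] R) (a : A)
    (ha : IsUnit (φ a - ψ a)) :
    letI : Module A R := Module.compHom R (φ : A →+* R)
    letI : Module A M := Module.compHom M (ψ : A →+* R)
    ∀ f : R →ₗ[A] M, f = 0 := by
  let : Module A R := Module.compHom R (φ : A →+* R)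
  let : Module A M := Module.compHom M (ψ : A →+* R)
  intro f
  have smul_R (b : A) (r : R) : b • r = φ b * r := rfl
  have smul_M (b : A) (m : M) : b • m = ψ b • m := rfl
  have f_apply (r : R) : f r = r • f 1 := by
    simpa [smul_R, smul_M] using f.map_smul (algebraMap R A r) 1
  have hf1 : (φ a - ψ a) • f 1 = 0 := by
    rw [sub_smul, ← f_apply, sub_eq_zero, ← smul_M, ← f.map_smul, smul_R, mul_one]
  ext r
  rw [f_apply, LinearMap.zero_apply, ha.smul_eq_zero.1 hf1, smul_zero]

theorem PadicInt.isUnit_sub_iff {p : ℕ} [Fact p.Prime] (x y : ℤ_[p]) :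
    IsUnit (x - y) ↔ toZMod x ≠ toZMod y := by
  rw [← IsLocalRing.notMem_maximalIdeal, ← ker_toZMod, RingHom.mem_ker, map_sub, sub_eq_zero]

theorem zpow_ne_zpow_of_forall_mem_zpowers {G : Type*} [Group G] [Finite G] {g : G}
    (hg : ∀ x : G, x ∈ Subgroup.zpowers g) {i j : ℤ} (hij : ¬ (Nat.card G : ℤ) ∣ i - j) :
    g ^ i ≠ g ^ j := by
  rwa [Ne, zpow_eq_zpow_iff_modEq, orderOf_eq_card_of_forall_mem_zpowers hg, Int.modEq_comm,
    Int.modEq_iff_dvd]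

noncomputable def LaurentPolynomial.evalUnitAlgHom (p : ℕ) [Fact p.Prime] (c : ℤ_[p]ˣ) :
    LaurentPolynomial ℤ_[p] →ₐ[ℤ_[p]] ℤ_[p] :=
  AddMonoidAlgebra.lift ℤ_[p] ℤ_[p] ℤ ((Units.coeHom ℤ_[p]).comp (zpowersHom ℤ_[p]ˣ c))

@[simp]
theorem LaurentPolynomial.evalUnitAlgHom_T (p : ℕ) [Fact p.Prime] (c : ℤ_[p]ˣ) (n : ℤ) :
    evalUnitAlgHom p c (T n) = ((c ^ n : ℤ_[p]ˣ) : ℤ_[p]) := by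
  rw [evalUnitAlgHom, T]
  erw [AddMonoidAlgebra.lift_single]
  simp

/-- Let `p` be a prime, `u` a unit of `ℤ_p` whose residue modulo `p` generates
`(ℤ/pℤ)ˣ`, and `i, j` integers with `i - j` not divisible by `p - 1`.  For any `ℤ_p`-module `N`,
every `ℤ_p[T,T⁻¹]`-linear map `ℤ_p(i) → N(j)` is zero. -/
theorem hom_twisted_eq_zero (p : ℕ) [Fact p.Prime] (u : ℤ_[p]ˣ)
    (hu : ∀ g : (ZMod p)ˣ,
      g ∈ Subgroup.zpowers (Units.map (PadicInt.toZMod (p := p)).toMonoidHom u))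
    (i j : ℤ) (hij : ¬ ((p : ℤ) - 1) ∣ (i - j))
    (N : Type*) [AddCommGroup N] [Module ℤ_[p] N] :
    letI : Module (LaurentPolynomial ℤ_[p]) ℤ_[p] := twistedModule p ℤ_[p] (u ^ i)
    letI : Module (LaurentPolynomial ℤ_[p]) N := twistedModule p N (u ^ j)
    ∀ f : ℤ_[p] →ₗ[LaurentPolynomial ℤ_[p]] N, f = 0 := by
  have card_units : ((Nat.card (ZMod p)ˣ : ℕ) : ℤ) = p - 1 := by
    rw [Nat.card_eq_fintype_card, ZMod.card_units, Nat.cast_pred (Fact.out : p.Prime).pos]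
  have residues_ne := zpow_ne_zpow_of_forall_mem_zpowers hu (card_units ▸ hij)
  refine LinearMap.eq_zero_of_isUnit_sub_of_compHom (R := ℤ_[p])
    (LaurentPolynomial.evalUnitAlgHom p (u ^ i)) (LaurentPolynomial.evalUnitAlgHom p (u ^ j))
    (LaurentPolynomial.T 1) ?_
  rw [PadicInt.isUnit_sub_iff]
  contrapose! residues_ne
  ext
  simpa [← map_zpow] using residues_ne
end

section
/- Let p be a prime number, let u be a unit of ℤ_p whose residue class modulo p generates (ℤ/pℤ)ˣ, and let i and j be integers such that i − j is not divisible by p − 1. Let M be a finitely generated ℤ_p-module and N any ℤ_p-module. Then Ext¹_{ℤ_p[T,T⁻¹]}(M(i), N(j)) = 0. -/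
/-!
Write `R = ℤ_p[T,T⁻¹]`. Since the reduction of `u` has order `p - 1` in `(ℤ/pℤ)ˣ`, the difference
`u^j - u^i` is a unit of `ℤ_p`, so `b = (T - u^i) / (u^j - u^i) ∈ R` acts as `0` on `M(i)` and
as the identity on `N(j)`. The action of `b` on `Ext¹(M(i), N(j))` can be computed through either
argument, hence it is both `0` and the identity, and the `Ext` group vanishes.
-/

open CategoryTheory

open Opposite Limits ZeroObject

section ExtScalar

variable {R : Type*} [Ring R] {C : Type*} [Category C] [Abelian C] [Linear R C]
  [EnoughProjectives C]

lemma Ext_map_smul_id_op_app (r : R) (n : ℕ) (M N : C) :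
    ((Ext R C n).map (r • 𝟙 M).op).app N = ((Ext R C n).obj (op M)).map (r • 𝟙 N) := by
  let P : ProjectiveResolution M := ProjectiveResolution.of M
  let G := ((linearYoneda R C).obj N).rightOp
  let β : G ⟶ G := NatTrans.rightOp ((linearYoneda R C).map (r • 𝟙 N))
  have hlift : (r • 𝟙 P.complex) ≫ P.π = P.π ≫ (ChainComplex.single₀ C).map (r • 𝟙 M) := by
    apply HomologicalComplex.hom_ext
    rintro (_ | k) <;> simp [Linear.smul_comp]
    erw [Linear.comp_smul, Category.comp_id]
    rfl
  have hres : (G.mapHomologicalComplex _).map (r • 𝟙 P.complex)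
      = (NatTrans.mapHomologicalComplex β _).app P.complex := by
    ext k : 1
    apply Quiver.Hom.unop_inj
    ext φ
    change (r • 𝟙 (P.complex.X k)) ≫ (φ : P.complex.X k ⟶ N)
      = (φ : P.complex.X k ⟶ N) ≫ (r • 𝟙 N)
    erw [Linear.smul_comp, Linear.comp_smul, Category.id_comp, Category.comp_id]
  change ((G.leftDerived n).map (r • 𝟙 M)).unop = ((NatTrans.leftDerived β n).app M).unop
  rw [Functor.leftDerived_map_eq G n (r • 𝟙 M) _ hlift,
    ProjectiveResolution.leftDerived_app_eq β P n, Functor.comp_map, hres]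

lemma Ext_succ_map_zero_op_app (n : ℕ) (M M' N : C) :
    ((Ext R C (n + 1)).map (0 : M ⟶ M').op).app N = 0 := by
  have hzero : IsZero (((Ext R C (n + 1)).obj (op (0 : C))).obj N) :=
    (((linearYoneda R C).obj N).rightOp.isZero_leftDerived_obj_projective_succ n 0).unop
  rw [← zero_comp (X := M) (Y := 0) (f := 0), op_comp, Functor.map_comp, NatTrans.comp_app,
    hzero.eq_zero_of_tgt (((Ext R C (n + 1)).map (0 : (0 : C) ⟶ M').op).app N), zero_comp]

lemma isZero_Ext_succ_of_smul_id (r : R) (n : ℕ) {M N : C} (hM : r • 𝟙 M = 0)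
    (hN : r • 𝟙 N = 𝟙 N) : IsZero (((Ext R C (n + 1)).obj (op M)).obj N) := by
  rw [IsZero.iff_id_eq_zero, ← CategoryTheory.Functor.map_id, ← hN, ← Ext_map_smul_id_op_app,
    hM, Ext_succ_map_zero_op_app]

end ExtScalar

namespace LaurentPolynomial

variable {p : ℕ} [Fact p.Prime]

lemma evalUnit_C (c : ℤ_[p]ˣ) (z : ℤ_[p]) : evalUnit p c (C z) = z := by
  rw [← single_eq_C]
  exact (AddMonoidAlgebra.lift_single _ _ _).trans (by simp)

lemma evalUnit_T (c : ℤ_[p]ˣ) : evalUnit p c (T 1) = c :=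
  (AddMonoidAlgebra.lift_single _ _ _).trans (by simp)

lemma exists_evalUnit_eq_zero_and_eq_one {c d : ℤ_[p]ˣ} (h : IsUnit ((c : ℤ_[p]) - d)) :
    ∃ b, evalUnit p d b = 0 ∧ evalUnit p c b = 1 :=
  ⟨C (↑h.unit⁻¹ : ℤ_[p]) * (T 1 - C (d : ℤ_[p])), by simp [evalUnit_C, evalUnit_T]⟩

end LaurentPolynomial

section Twisted

variable {p : ℕ} [Fact p.Prime] {M : Type*} [AddCommGroup M] [Module ℤ_[p] M] {c : ℤ_[p]ˣ}
  {r : LaurentPolynomial ℤ_[p]}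

lemma twistedModule_smul_id_eq_zero (hr : LaurentPolynomial.evalUnit p c r = 0) :
    letI := twistedModule p M c
    r • 𝟙 (ModuleCat.of (LaurentPolynomial ℤ_[p]) M) = 0 := by
  let := twistedModule p M c
  ext x
  change LaurentPolynomial.evalUnit p c r • x = 0
  rw [hr, zero_smul]

lemma twistedModule_smul_id_eq_id (hr : LaurentPolynomial.evalUnit p c r = 1) :
    letI := twistedModule p M c
    r • 𝟙 (ModuleCat.of (LaurentPolynomial ℤ_[p]) M) = 𝟙 _ := by
  let := twistedModule p M c
  ext x
  change LaurentPolynomial.evalUnit p c r • x = x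
  rw [hr, one_smul]

end Twisted

lemma PadicInt.isUnit_zpow_sub_zpow {p : ℕ} [Fact p.Prime] {u : ℤ_[p]ˣ}
    (hu : ∀ g : (ZMod p)ˣ,
      g ∈ Subgroup.zpowers (Units.map (PadicInt.toZMod (p := p)).toMonoidHom u))
    {i j : ℤ} (hij : ¬ ((p : ℤ) - 1) ∣ (i - j)) :
    IsUnit ((↑(u ^ j) : ℤ_[p]) - ↑(u ^ i)) := by
  set ū := Units.map (PadicInt.toZMod (p := p)).toMonoidHom u
  rw [← isUnit_map_iff PadicInt.toZMod, map_sub, isUnit_iff_ne_zero, sub_ne_zero]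
  intro h
  have hū : ū ^ j = ū ^ i := Units.ext (by rw [← map_zpow, ← map_zpow]; exact h)
  rw [zpow_eq_zpow_iff_modEq, orderOf_eq_card_of_forall_mem_zpowers hu, Nat.card_eq_fintype_card,
    ZMod.card_units, Nat.cast_pred (Fact.out : p.Prime).pos] at hū
  exact hij hū.dvd

theorem ext_one_twisted_eq_zero_general (p : ℕ) [Fact p.Prime] (u : ℤ_[p]ˣ)
    (hu : ∀ g : (ZMod p)ˣ,
      g ∈ Subgroup.zpowers (Units.map (PadicInt.toZMod (p := p)).toMonoidHom u))
    (i j : ℤ) (hij : ¬ ((p : ℤ) - 1) ∣ (i - j))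
    (M : Type) [AddCommGroup M] [Module ℤ_[p] M]
    (N : Type) [AddCommGroup N] [Module ℤ_[p] N] :
    letI : Module (LaurentPolynomial ℤ_[p]) M := twistedModule p M (u ^ i)
    letI : Module (LaurentPolynomial ℤ_[p]) N := twistedModule p N (u ^ j)
    Subsingleton
      (((Ext (LaurentPolynomial ℤ_[p]) (ModuleCat (LaurentPolynomial ℤ_[p])) 1).obj
          (Opposite.op (ModuleCat.of (LaurentPolynomial ℤ_[p]) M))).obj
        (ModuleCat.of (LaurentPolynomial ℤ_[p]) N)) := by
  obtain ⟨b, hbM, hbN⟩ :=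
    LaurentPolynomial.exists_evalUnit_eq_zero_and_eq_one (PadicInt.isUnit_zpow_sub_zpow hu hij)
  exact ModuleCat.subsingleton_of_isZero <| isZero_Ext_succ_of_smul_id b 0
    (twistedModule_smul_id_eq_zero hbM) (twistedModule_smul_id_eq_id hbN)

/-- the unnamed Proposition of Section 6 of the paper: Let `p` be a prime, `u` a
unit of `ℤ_p` whose residue modulo `p` generates `(ℤ/pℤ)ˣ`, and `i, j` integers with `i - j`
not divisible by `p - 1`.  For `M` a finitely generated `ℤ_p`-module and `N` any `ℤ_p`-module,
`Ext¹_{ℤ_p[T,T⁻¹]}(M(i), N(j)) = 0`. -/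
theorem ext_one_twisted_eq_zero (p : ℕ) [Fact p.Prime] (u : ℤ_[p]ˣ)
    (hu : ∀ g : (ZMod p)ˣ,
      g ∈ Subgroup.zpowers (Units.map (PadicInt.toZMod (p := p)).toMonoidHom u))
    (i j : ℤ) (hij : ¬ ((p : ℤ) - 1) ∣ (i - j))
    (M : Type) [AddCommGroup M] [Module ℤ_[p] M] [Module.Finite ℤ_[p] M]
    (N : Type) [AddCommGroup N] [Module ℤ_[p] N] :
    letI : Module (LaurentPolynomial ℤ_[p]) M := twistedModule p M (u ^ i)
    letI : Module (LaurentPolynomial ℤ_[p]) N := twistedModule p N (u ^ j)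
    Subsingleton
      (((Ext (LaurentPolynomial ℤ_[p]) (ModuleCat (LaurentPolynomial ℤ_[p])) 1).obj
          (Opposite.op (ModuleCat.of (LaurentPolynomial ℤ_[p]) M))).obj
        (ModuleCat.of (LaurentPolynomial ℤ_[p]) N)) :=
  ext_one_twisted_eq_zero_general p u hu i j hij M N
end

section
/- Let p be a prime number and let u be a unit of ℤ_p whose residue class modulo p generates (ℤ/pℤ)ˣ. Let m ≤ n be integers with 0 ≤ n − m < p − 1. Let M be a finitely generated ℤ_p-module equipped with a ℤ_p-linear endomorphism T, and let 0 = G_{m−1} ⊆ G_m ⊆ ⋯ ⊆ G_n = M be a chain of T-invariant ℤ_p-submodules such that for each k with m ≤ k ≤ n, the endomorphism induced by T on the quotient G_k / G_{k−1} is multiplication by the scalar u^k. Then there is a (non-canonical) isomorphism of ℤ_p-modules M ≅ ⊕_{k=m}^{n} G_k / G_{k−1}. -/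
/-!
The weights `u ^ m, …, u ^ n` are pairwise distinct modulo `p`, because `u` has order `p - 1`
modulo `p` and `n - m < p - 1`; so their differences are units of `ℤ_p`. For `m ≤ k ≤ n` the
polynomial `f = ∏_{m ≤ i < k} (X - u ^ i)` kills `G_{k-1}`, while `f(T)` acts on
`G_k / G_{k-1}` as the unit `f(u ^ k)`. Hence `1 - f(T) / f(u ^ k)` retracts `G_k` onto
`G_{k-1}`, so `G_k ≅ G_{k-1} × G_k / G_{k-1}`, and induction on `k` splits `M = G_n`.
-/

open DirectSum Polynomial

section Splitting

variable {R M : Type*} [CommRing R] [AddCommGroup M] [Module R M]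
  {T : Module.End R M} {V W : Submodule R M} {c : R}

theorem Module.End.pow_apply_sub_pow_smul_mem (hWV : W ≤ V)
    (hc : ∀ x ∈ V, T x - c • x ∈ W) (k : ℕ) {x : M} (hx : x ∈ V) : (T ^ k) x - c ^ k • x ∈ W := by
  induction k with
  | zero => simp
  | succ k ih =>
    have hT : T ((T ^ k) x - c ^ k • x) ∈ W := by
      simpa using W.add_mem (hc _ (hWV ih)) (W.smul_mem c ih)
    have hexpand : (T ^ (k + 1)) x - c ^ (k + 1) • x
        = T ((T ^ k) x - c ^ k • x) + c ^ k • (T x - c • x) := by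
      rw [pow_succ', Module.End.mul_apply, map_sub, map_smul, smul_sub, smul_smul, pow_succ]
      abel
    exact hexpand ▸ W.add_mem hT (W.smul_mem _ (hc x hx))

theorem Module.End.aeval_apply_sub_eval_smul_mem (hWV : W ≤ V)
    (hc : ∀ x ∈ V, T x - c • x ∈ W) (f : R[X]) {x : M} (hx : x ∈ V) :
    aeval T f x - f.eval c • x ∈ W := by
  induction f using Polynomial.induction_on' with
  | add f g hf hg =>
    simpa [add_smul, add_sub_add_comm] using W.add_mem hf hg
  | monomial k a =>
    simpa [Module.algebraMap_end_apply, mul_smul, ← smul_sub] using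
      W.smul_mem a (pow_apply_sub_pow_smul_mem hWV hc k hx)

theorem Module.End.aeval_mul_X_sub_C_apply_eq_zero {f : R[X]}
    (hc : ∀ x ∈ V, T x - c • x ∈ W) (hf : ∀ x ∈ W, aeval T f x = 0) {x : M} (hx : x ∈ V) :
    aeval T (f * (X - C c)) x = 0 := by
  simpa [Module.algebraMap_end_apply] using hf _ (hc x hx)

theorem Submodule.nonempty_linearEquiv_prod_quotient_of_aeval {f : R[X]} (hWV : W ≤ V)
    (hc : ∀ x ∈ V, T x - c • x ∈ W) (hf : ∀ x ∈ W, aeval T f x = 0)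
    (hunit : IsUnit (f.eval c)) :
    Nonempty (V ≃ₗ[R] W × (V ⧸ W.comap V.subtype)) := by
  obtain ⟨a, ha⟩ := hunit
  set Q : Module.End R M := LinearMap.id - (↑a⁻¹ : R) • aeval T f
  have hQ : ∀ x ∈ V, Q x ∈ W := by
    intro x hx
    have : Q x = -(↑a⁻¹ : R) • (aeval T f x - f.eval c • x) := by
      simp [Q, ← ha, smul_sub, smul_smul]
      abel
    exact this ▸ W.smul_mem _ (Module.End.aeval_apply_sub_eval_smul_mem hWV hc f hx)
  let π : V →ₗ[R] W.comap V.subtype :=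
    (Q.restrict fun x hx => hWV (hQ x hx)).codRestrict _ fun x => hQ x x.2
  have hπ : ∀ x : W.comap V.subtype, π x = x := fun x => by
    refine Subtype.ext (Subtype.ext ?_)
    change Q x = x
    simpa [Q] using hf _ x.2
  have hcompl := LinearMap.isCompl_of_proj hπ
  exact ⟨(Submodule.prodEquivOfIsCompl _ _ hcompl).symm.trans
    ((Submodule.comapSubtypeEquivOfLe hWV).prodCongr
      (Submodule.quotientEquivOfIsCompl _ _ hcompl).symm)⟩

end Splitting

noncomputable def DirectSum.lequivProdOfNotMem (R : Type*) [Semiring R] {ι : Type*}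
    [DecidableEq ι] {s : Finset ι} {a : ι} (ha : a ∉ s) (β : ι → Type*)
    [∀ i, AddCommMonoid (β i)] [∀ i, Module R (β i)] :
    (⨁ i : ↥(insert a s), β i) ≃ₗ[R] β a × ⨁ i : s, β i :=
  (DirectSum.lequivCongrLeft R (Finset.subtypeInsertEquivOption ha)).trans
    (DirectSum.lequivProdDirectSum R)

section Filtration

variable {R M : Type*} [CommRing R] [AddCommGroup M] [Module R M]

abbrev filtrationLayer (G : ℤ → Submodule R M) (k : ℤ) : Type _ :=
  G k ⧸ (G (k - 1)).comap (G k).subtype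

variable {T : Module.End R M} {G : ℤ → Submodule R M} {c : ℤ → R} {m n : ℤ}

theorem aeval_prod_X_sub_C_apply_eq_zero (hbot : G (m - 1) = ⊥)
    (hwt : ∀ k, m ≤ k → k ≤ n → ∀ x ∈ G k, T x - c k • x ∈ G (k - 1))
    {k : ℤ} (hmk : m - 1 ≤ k) (hkn : k ≤ n) {x : M} (hx : x ∈ G k) :
    aeval T (∏ i ∈ Finset.Icc m k, (X - C (c i))) x = 0 := by
  induction k, hmk using Int.leInduction generalizing x with
  | base => simp_all
  | succ j hj ih =>
    rw [← Finset.insert_Icc_right_eq_Icc_add_one (by omega), Finset.prod_insert (by simp),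
      mul_comm]
    refine Module.End.aeval_mul_X_sub_C_apply_eq_zero (fun y hy => ?_)
      (fun y hy => ih (by omega) hy) hx
    simpa using hwt (j + 1) (by omega) hkn y hy

theorem nonempty_linearEquiv_prod_filtrationLayer (hbot : G (m - 1) = ⊥)
    (hchain : ∀ k, m ≤ k → k ≤ n → G (k - 1) ≤ G k)
    (hwt : ∀ k, m ≤ k → k ≤ n → ∀ x ∈ G k, T x - c k • x ∈ G (k - 1))
    (hunit : ∀ i j, m ≤ j → j < i → i ≤ n → IsUnit (c i - c j))
    {k : ℤ} (hmk : m ≤ k) (hkn : k ≤ n) :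
    Nonempty (G k ≃ₗ[R] G (k - 1) × filtrationLayer G k) := by
  refine Submodule.nonempty_linearEquiv_prod_quotient_of_aeval (hchain k hmk hkn)
    (hwt k hmk hkn) (fun x hx => aeval_prod_X_sub_C_apply_eq_zero hbot hwt (by omega)
      (by omega) hx) ?_
  simp only [eval_prod, eval_sub, eval_X, eval_C, IsUnit.prod_iff, Finset.mem_Icc]
  exact fun j hj => hunit k j hj.1 (by omega) hkn

theorem nonempty_linearEquiv_directSum_filtrationLayer (hbot : G (m - 1) = ⊥)
    (hchain : ∀ k, m ≤ k → k ≤ n → G (k - 1) ≤ G k)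
    (hwt : ∀ k, m ≤ k → k ≤ n → ∀ x ∈ G k, T x - c k • x ∈ G (k - 1))
    (hunit : ∀ i j, m ≤ j → j < i → i ≤ n → IsUnit (c i - c j))
    {k : ℤ} (hmk : m - 1 ≤ k) (hkn : k ≤ n) :
    Nonempty (G k ≃ₗ[R] ⨁ i : Finset.Icc m k, filtrationLayer G i) := by
  induction k, hmk using Int.leInduction with
  | base =>
    have : IsEmpty (Finset.Icc m (m - 1)) := ⟨fun i => by have := Finset.mem_Icc.mp i.2; omega⟩
    have : Subsingleton (G (m - 1)) := by rw [hbot]; infer_instance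
    exact ⟨LinearEquiv.ofSubsingleton _ _⟩
  | succ j hj ih =>
    obtain ⟨e⟩ := ih (by omega)
    obtain ⟨e'⟩ := nonempty_linearEquiv_prod_filtrationLayer hbot hchain hwt hunit (k := j + 1)
      (by omega) hkn
    rw [← Finset.insert_Icc_right_eq_Icc_add_one (by omega)]
    exact ⟨e'.trans (((LinearEquiv.ofEq _ _ (by rw [add_sub_cancel_right])).trans e).prodCongr
      (LinearEquiv.refl _ _) |>.trans (LinearEquiv.prodComm _ _ _) |>.trans
      (DirectSum.lequivProdOfNotMem R (by simp) _).symm)⟩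

end Filtration

theorem zpow_ne_zpow_of_sub_lt_orderOf {H : Type*} [Group H] {g : H} {a b : ℤ} (hba : b < a)
    (hab : a - b < orderOf g) : g ^ a ≠ g ^ b := by
  rw [Ne, zpow_eq_zpow_iff_modEq, Int.modEq_comm, Int.modEq_iff_dvd]
  intro hdvd
  have := Int.le_of_dvd (by omega) hdvd
  omega

namespace PadicInt

variable {p : ℕ} [Fact p.Prime]

theorem isUnit_sub_of_toZMod_ne {x y : ℤ_[p]} (h : toZMod x ≠ toZMod y) : IsUnit (x - y) := by
  by_contra hxy
  have hmem : x - y ∈ RingHom.ker (toZMod (p := p)) := by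
    rw [ker_toZMod]
    exact (IsLocalRing.mem_maximalIdeal _).mpr hxy
  exact h (sub_eq_zero.mp (by simpa using hmem))

theorem isUnit_zpow_sub_zpow_s8 {u : ℤ_[p]ˣ}
    (hu : ∀ g : (ZMod p)ˣ, g ∈ Subgroup.zpowers (Units.map (toZMod (p := p)).toMonoidHom u))
    {a b : ℤ} (hba : b < a) (hab : a - b < (p : ℤ) - 1) :
    IsUnit (((u ^ a : ℤ_[p]ˣ) : ℤ_[p]) - ((u ^ b : ℤ_[p]ˣ) : ℤ_[p])) := by
  have hreduce : ∀ k : ℤ, toZMod ((u ^ k : ℤ_[p]ˣ) : ℤ_[p])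
      = ((Units.map (toZMod (p := p)).toMonoidHom u ^ k : (ZMod p)ˣ) : ZMod p) :=
    fun k => by rw [← map_zpow]; rfl
  have hord : orderOf (Units.map (toZMod (p := p)).toMonoidHom u) = p - 1 := by
    rw [orderOf_eq_card_of_forall_mem_zpowers hu, Nat.card_eq_fintype_card, ZMod.card_units]
  refine isUnit_sub_of_toZMod_ne ?_
  rw [hreduce, hreduce, Ne, Units.val_inj]
  refine zpow_ne_zpow_of_sub_lt_orderOf hba ?_
  have := (Fact.out : p.Prime).two_le
  rw [hord]
  omega

end PadicInt

theorem filtered_module_splits_general (p : ℕ) [Fact p.Prime] (u : ℤ_[p]ˣ)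
    (hu : ∀ g : (ZMod p)ˣ,
      g ∈ Subgroup.zpowers (Units.map (PadicInt.toZMod (p := p)).toMonoidHom u))
    (m n : ℤ) (hmn : m ≤ n) (hp : n - m < (p : ℤ) - 1)
    (M : Type) [AddCommGroup M] [Module ℤ_[p] M]
    (T : M →ₗ[ℤ_[p]] M)
    (G : ℤ → Submodule ℤ_[p] M)
    (hbot : G (m - 1) = ⊥) (htop : G n = ⊤)
    (hchain : ∀ k : ℤ, m ≤ k → k ≤ n → G (k - 1) ≤ G k)
    (hwt : ∀ k : ℤ, m ≤ k → k ≤ n → ∀ x ∈ G k,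
      T x - ((u ^ k : ℤ_[p]ˣ) : ℤ_[p]) • x ∈ G (k - 1)) :
    Nonempty
      (M ≃ₗ[ℤ_[p]]
        ⨁ k : (Finset.Icc m n),
          (G (k : ℤ) ⧸ Submodule.comap (G (k : ℤ)).subtype (G ((k : ℤ) - 1)))) := by
  obtain ⟨e⟩ := nonempty_linearEquiv_directSum_filtrationLayer hbot hchain hwt
    (fun i j hmj hji hin => PadicInt.isUnit_zpow_sub_zpow_s8 hu hji (by omega)) (by omega) le_rfl
  exact ⟨(LinearEquiv.ofTop _ htop).symm.trans e⟩

/-- the algebraic content of Proposition 6.2 of the paper: Let `p` be a prime and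
`u` a unit of `ℤ_p` whose residue modulo `p` generates `(ℤ/pℤ)ˣ`.  Let `m ≤ n` be integers with
`0 ≤ n - m < p - 1`.  Let `M` be a finitely generated `ℤ_p`-module with a `ℤ_p`-linear
endomorphism `T` and a chain of `T`-invariant submodules `0 = G_{m-1} ⊆ G_m ⊆ ⋯ ⊆ G_n = M`
such that `T` induces multiplication by `u ^ k` on each quotient `G_k / G_{k-1}`.  Then there
is a (non-canonical) `ℤ_p`-module isomorphism `M ≅ ⊕_{k=m}^{n} G_k / G_{k-1}`. -/
theorem filtered_module_splits (p : ℕ) [Fact p.Prime] (u : ℤ_[p]ˣ)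
    (hu : ∀ g : (ZMod p)ˣ,
      g ∈ Subgroup.zpowers (Units.map (PadicInt.toZMod (p := p)).toMonoidHom u))
    (m n : ℤ) (hmn : m ≤ n) (hp : n - m < (p : ℤ) - 1)
    (M : Type) [AddCommGroup M] [Module ℤ_[p] M] [Module.Finite ℤ_[p] M]
    (T : M →ₗ[ℤ_[p]] M)
    (G : ℤ → Submodule ℤ_[p] M)
    (hbot : G (m - 1) = ⊥) (htop : G n = ⊤)
    (hchain : ∀ k : ℤ, m ≤ k → k ≤ n → G (k - 1) ≤ G k)
    (hinv : ∀ k : ℤ, m ≤ k → k ≤ n → ∀ x ∈ G k, T x ∈ G k)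
    (hwt : ∀ k : ℤ, m ≤ k → k ≤ n → ∀ x ∈ G k,
      T x - ((u ^ k : ℤ_[p]ˣ) : ℤ_[p]) • x ∈ G (k - 1)) :
    Nonempty
      (M ≃ₗ[ℤ_[p]]
        ⨁ k : (Finset.Icc m n),
          (G (k : ℤ) ⧸ Submodule.comap (G (k : ℤ)).subtype (G ((k : ℤ) - 1)))) :=
  filtered_module_splits_general p u hu m n hmn hp M T G hbot htop hchain hwt
end

section
/- Let p be a prime number and let A be a finitely generated module over the ring ℤ_p of p-adic integers. Suppose a : ℕ → A is a sequence of elements such that p^n • a(n) = 0 for all n and a(n) = p • a(n+1) for all n. Then a(n) = 0 for all n. -/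
/-!
Each `a n` is divisible by every power of `p`, since `a n = p ^ m • a (n + m)`. By Krull's
intersection theorem a finitely generated module over the Noetherian local ring `ℤ_[p]` is
Hausdorff for the `p`-adic topology, so `a n = 0`.
-/

section

variable {R M : Type*} [CommRing R] [AddCommGroup M] [Module R M]

theorem eq_pow_smul_of_eq_smul_succ {x : R} {a : ℕ → M} (h : ∀ n, a n = x • a (n + 1))
    (n m : ℕ) : a n = x ^ m • a (n + m) := by
  induction m with
  | zero => simp
  | succ m ih => rw [ih, h (n + m), smul_smul, ← pow_succ, add_assoc]

theorem IsHausdorff.eq_zero_of_eq_smul_succ {I : Ideal R} [IsHausdorff I M] {x : R} (hx : x ∈ I)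
    {a : ℕ → M} (h : ∀ n, a n = x • a (n + 1)) (n : ℕ) : a n = 0 :=
  IsHausdorff.haus ‹_› (a n) fun m ↦ SModEq.zero.mpr <| by
    rw [eq_pow_smul_of_eq_smul_succ h n m]
    exact Submodule.smul_mem_smul (Ideal.pow_mem_pow hx m) Submodule.mem_top

end

theorem lim_tor_vanishes_general (p : ℕ) [Fact p.Prime]
    (A : Type*) [AddCommGroup A] [Module ℤ_[p] A] [Module.Finite ℤ_[p] A]
    (a : ℕ → A)
    (hcomp : ∀ n : ℕ, a n = (p : ℤ_[p]) • a (n + 1)) :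
    ∀ n : ℕ, a n = 0 :=
  IsHausdorff.eq_zero_of_eq_smul_succ (I := IsLocalRing.maximalIdeal ℤ_[p]) PadicInt.p_nonunit
    hcomp

/-- from the proof of Proposition 1.4 of the paper: Let `p` be a prime and `A` a
finitely generated `ℤ_p`-module.  If `a : ℕ → A` satisfies `p^n • a n = 0` and
`a n = p • a (n+1)` for all `n`, then `a n = 0` for all `n`.  (Equivalently,
`lim_n Tor^{ℤ_p}(ℤ/p^n, A) = 0`.) -/
theorem lim_tor_vanishes (p : ℕ) [Fact p.Prime]
    (A : Type*) [AddCommGroup A] [Module ℤ_[p] A] [Module.Finite ℤ_[p] A]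
    (a : ℕ → A)
    (htor : ∀ n : ℕ, ((p : ℤ_[p]) ^ n) • a n = 0)
    (hcomp : ∀ n : ℕ, a n = (p : ℤ_[p]) • a (n + 1)) :
    ∀ n : ℕ, a n = 0 :=
  lim_tor_vanishes_general p A a hcomp
end
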